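/- Let k be a field of characteristic 2. In k[y], the polynomial y⁵ + y⁴ + y³ lies in m³ but not in m⁴ where m = (y); that is, its order at the origin equals 3. Consequently, along the kangaroo move the residual order (shade) jumps from 2 (the order of y² + z² at the origin of k[y,z]) to 3, while the order of the defining equations f₂ = x² + y³·z³·(y²+z²) and f₃ = x² + z⁶·(y⁵+y⁴+y³) at the origin remains equal to 2 (each lies in (x,y,z)² but not in (x,y,z)³). -/
import Mathlib

open MvPolynomial

lemma aux_map_le {n : ℕ} {k : Type*} [Field k] (s : Set (MvPolynomial (Fin n) k))
    (v : Fin n → Polynomial k) (hs : ∀ g ∈ s, aeval v g ∈ Ideal.span {Polynomial.X}) :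
    Ideal.map (aeval v : MvPolynomial (Fin n) k →ₐ[k] Polynomial k) (Ideal.span s)
      ≤ Ideal.span {Polynomial.X} := by
  rw [Ideal.map_span, Ideal.span_le]
  rintro _ ⟨g, hg, rfl⟩
  exact hs g hg

lemma aux_not_mem {n : ℕ} {k : Type*} [Field k] (s : Set (MvPolynomial (Fin n) k))
    (v : Fin n → Polynomial k) (hs : ∀ g ∈ s, aeval v g ∈ Ideal.span {Polynomial.X})
    (p : MvPolynomial (Fin n) k) (m : ℕ)
    (hp : ¬ (Polynomial.X : Polynomial k) ^ m ∣ aeval v p) :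
    p ∉ (Ideal.span s) ^ m := by
  intro hmem
  apply hp
  have h1 : aeval v p ∈ Ideal.map (aeval v : MvPolynomial (Fin n) k →ₐ[k] Polynomial k)
      ((Ideal.span s) ^ m) := Ideal.mem_map_of_mem _ hmem
  rw [Ideal.map_pow] at h1
  have h2 := Ideal.pow_right_mono (aux_map_le s v hs) m h1
  rwa [Ideal.span_singleton_pow, Ideal.mem_span_singleton] at h2

/-- Let `k` be a field of characteristic 2.  In `k[y]`, the polynomial `y⁵ + y⁴ + y³`
lies in `m³` but not in `m⁴` where `m = (y)`; that is, its order at the origin equals 3.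
Consequently, along the kangaroo move the residual order (shade) jumps from 2 (the order
of `y² + z²` at the origin of `k[y,z]`) to 3, while the order of the defining equations
`f₂ = x² + y³·z³·(y² + z²)` and `f₃ = x² + z⁶·(y⁵ + y⁴ + y³)` at the origin remains
equal to 2 (each lies in `(x,y,z)²` but not in `(x,y,z)³`). -/
theorem stmt_10 (k : Type*) [Field k] [CharP k 2]
    (m₁ : Ideal (Polynomial k)) (hm₁ : m₁ = Ideal.span {Polynomial.X})
    (m₂ : Ideal (MvPolynomial (Fin 2) k)) (hm₂ : m₂ = Ideal.span {X 0, X 1})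
    (M : Ideal (MvPolynomial (Fin 3) k)) (hM : M = Ideal.span {X 0, X 1, X 2})
    (f₂ f₃ : MvPolynomial (Fin 3) k)
    (hf₂ : f₂ = X 0 ^ 2 + X 1 ^ 3 * X 2 ^ 3 * (X 1 ^ 2 + X 2 ^ 2))
    (hf₃ : f₃ = X 0 ^ 2 + X 2 ^ 6 * (X 1 ^ 5 + X 1 ^ 4 + X 1 ^ 3)) :
    ((Polynomial.X ^ 5 + Polynomial.X ^ 4 + Polynomial.X ^ 3 : Polynomial k) ∈ m₁ ^ 3 ∧
      (Polynomial.X ^ 5 + Polynomial.X ^ 4 + Polynomial.X ^ 3 : Polynomial k) ∉ m₁ ^ 4) ∧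
    ((X 0 ^ 2 + X 1 ^ 2 : MvPolynomial (Fin 2) k) ∈ m₂ ^ 2 ∧
      (X 0 ^ 2 + X 1 ^ 2 : MvPolynomial (Fin 2) k) ∉ m₂ ^ 3) ∧
    (f₂ ∈ M ^ 2 ∧ f₂ ∉ M ^ 3) ∧
    (f₃ ∈ M ^ 2 ∧ f₃ ∉ M ^ 3) := by
  subst hm₁ hm₂ hM hf₂ hf₃
  -- the detector substitution X 0 ↦ X, others ↦ 0
  set v3 : Fin 3 → Polynomial k := fun i => if i = 0 then Polynomial.X else 0 with hv3
  set v2 : Fin 2 → Polynomial k := fun i => if i = 0 then Polynomial.X else 0 with hv2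
  have h20 : (X 0 : MvPolynomial (Fin 2) k) ∈ Ideal.span {X 0, X 1} :=
    Ideal.subset_span (by simp)
  have h21 : (X 1 : MvPolynomial (Fin 2) k) ∈ Ideal.span {X 0, X 1} :=
    Ideal.subset_span (by simp)
  have h30 : (X 0 : MvPolynomial (Fin 3) k) ∈ Ideal.span {X 0, X 1, X 2} :=
    Ideal.subset_span (by simp)
  have h31 : (X 1 : MvPolynomial (Fin 3) k) ∈ Ideal.span {X 0, X 1, X 2} :=
    Ideal.subset_span (by simp)
  have h32 : (X 2 : MvPolynomial (Fin 3) k) ∈ Ideal.span {X 0, X 1, X 2} :=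
    Ideal.subset_span (by simp)
  have hs2 : ∀ g ∈ ({X 0, X 1} : Set (MvPolynomial (Fin 2) k)),
      aeval v2 g ∈ Ideal.span {Polynomial.X} := by
    rintro g (rfl | rfl) <;> simp [hv2, Ideal.mem_span_singleton]
  have hs3 : ∀ g ∈ ({X 0, X 1, X 2} : Set (MvPolynomial (Fin 3) k)),
      aeval v3 g ∈ Ideal.span {Polynomial.X} := by
    rintro g (rfl | rfl | rfl) <;> simp [hv3, Ideal.mem_span_singleton]
  refine ⟨⟨?_, ?_⟩, ⟨?_, ?_⟩, ⟨?_, ?_⟩, ⟨?_, ?_⟩⟩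
  · rw [Ideal.span_singleton_pow, Ideal.mem_span_singleton]
    exact ⟨Polynomial.X ^ 2 + Polynomial.X + 1, by ring⟩
  · rw [Ideal.span_singleton_pow, Ideal.mem_span_singleton]
    intro h
    have := (Polynomial.X_pow_dvd_iff.mp h) 3 (by norm_num)
    simp [Polynomial.coeff_X_pow] at this
  · exact add_mem (Ideal.pow_mem_pow h20 2) (Ideal.pow_mem_pow h21 2)
  · apply aux_not_mem _ v2 hs2
    intro h
    have := (Polynomial.X_pow_dvd_iff.mp h) 2 (by norm_num)
    simp [hv2, Polynomial.coeff_X_pow] at this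
  · refine add_mem (Ideal.pow_mem_pow h30 2) ?_
    have : (X 1 * X 2 : MvPolynomial (Fin 3) k) ∈ Ideal.span {X 0, X 1, X 2} ^ 2 := by
      rw [pow_two]; exact Ideal.mul_mem_mul h31 h32
    have h := Ideal.mul_mem_left _ (X 1 ^ 2 * X 2 ^ 2 * (X 1 ^ 2 + X 2 ^ 2)) this
    convert h using 1; ring
  · apply aux_not_mem _ v3 hs3
    intro h
    have := (Polynomial.X_pow_dvd_iff.mp h) 2 (by norm_num)
    simp [hv3, Polynomial.coeff_X_pow] at this
  · refine add_mem (Ideal.pow_mem_pow h30 2) ?_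
    have h := Ideal.mul_mem_left _ (X 2 ^ 4 * (X 1 ^ 5 + X 1 ^ 4 + X 1 ^ 3))
      (Ideal.pow_mem_pow h32 2)
    convert h using 1; ring
  · apply aux_not_mem _ v3 hs3
    intro h
    have := (Polynomial.X_pow_dvd_iff.mp h) 2 (by norm_num)
    simp [hv3, Polynomial.coeff_X_pow] at this
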